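/- For all integers m ≥ 0 and n ≥ 0, the rational function e_m(v) is regular at v = 0 and its n-th Taylor coefficient at v = 0 equals (n!·Γ(n+w)/Γ(w)) times the coefficient of u^m in φ_n(u). Equivalently, the double series identity ∑_{n≥0} (n!·Γ(n+w)/Γ(w))·φ_n(u)·v^n = ∑_{m≥0} e_m(v)·u^m holds coefficientwise. -/

import Mathlib

open Polynomial

noncomputable section

/-- Derivative of a rational function. -/
def ratDeriv (f : RatFunc ℚ) : RatFunc ℚ :=
  RatFunc.mk (Polynomial.derivative f.num * f.denom - f.num * Polynomial.derivative f.denom)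
    (f.denom ^ 2)


/-!
Expand everything at `v = 0` in `ℚ⸨X⸩`. Multiplying the recursion for `e m` by `v` gives
`e m · (1 - (m + a) v) = δ₀ₘ - v · R(e (m - 1))`, where `R` is a second-order differential operator
in `v`. Inductively `e (m - 1)` is a power series, so the right-hand side is one, and since
`1 - (m + a) v ≠ 0` this determines `e m`. The series `∑ₙ n! (w)ₙ [uᵐ] φₙ vⁿ` solves the same
equation: its coefficient of `vⁿ⁺¹` is the coefficient of `uᵐ` in the recursion for `φ (n + 1)`,
multiplied by `n! (w)ₙ`. Finally `n! (w)ₙ = n! Γ(n + w) / Γ(w)`.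
-/

open scoped LaurentSeries PowerSeries

theorem Polynomial.coeff_X_mul_derivative {R : Type*} [Semiring R] (p : R[X]) (n : ℕ) :
    (X * derivative p).coeff n = n * p.coeff n := by
  cases n with
  | zero => simp
  | succ n => rw [coeff_X_mul, coeff_derivative, ← Nat.cast_succ, Nat.cast_comm]

theorem PowerSeries.coeff_X_mul_derivative {R : Type*} [CommSemiring R] (F : R⟦X⟧) (n : ℕ) :
    coeff n (X * d⁄dX R F) = n * coeff n F := by
  cases n with
  | zero => simp
  | succ n => rw [coeff_succ_X_mul, coeff_derivative, mul_comm, Nat.cast_succ]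

theorem factorial_mul_ascPochhammer_eval_succ {S : Type*} [CommSemiring S] (w : S) (n : ℕ) :
    ((n + 1).factorial : S) * (ascPochhammer S (n + 1)).eval w
      = n.factorial * (ascPochhammer S n).eval w * ((n + 1) * (n + w)) := by
  rw [ascPochhammer_succ_eval, Nat.factorial_succ]
  push_cast
  ring

theorem ascPochhammer_eval_ratCast {K : Type*} [DivisionRing K] [CharZero K] (w : ℚ) (n : ℕ) :
    (((ascPochhammer ℚ n).eval w : ℚ) : K) = (ascPochhammer K n).eval (w : K) := by
  rw [← ascPochhammer_map (Rat.castHom K)]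
  exact (Polynomial.eval_map_apply (f := Rat.castHom K) w).symm

theorem Real.Gamma_add_nat_div_Gamma_eq {x : ℝ} (hx : 0 < x) (n : ℕ) :
    Gamma (x + n) / Gamma x = (ascPochhammer ℝ n).eval x := by
  induction n with
  | zero => simp [(Gamma_pos_of_pos hx).ne']
  | succ n ih =>
    rw [ascPochhammer_succ_eval, ← ih, Nat.cast_succ, ← add_assoc, Gamma_add_one (by positivity)]
    ring

theorem coe_algebraMap_polynomial (p : ℚ[X]) :
    ((algebraMap ℚ[X] (RatFunc ℚ) p : RatFunc ℚ) : ℚ⸨X⸩) = ((p : ℚ⟦X⟧) : ℚ⸨X⸩) :=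
  (RatFunc.coe_coe p).symm

theorem coe_rat_smul (r : ℚ) (f : RatFunc ℚ) :
    ((r • f : RatFunc ℚ) : ℚ⸨X⸩) = r • (f : ℚ⸨X⸩) := by
  rw [RatFunc.smul_eq_C_mul, map_mul, ← HahnSeries.C_mul_eq_smul, ← RatFunc.algebraMap_C,
    coe_algebraMap_polynomial, Polynomial.coe_C, HahnSeries.ofPowerSeries_C]

theorem coe_ratFunc_X :
    ((RatFunc.X : RatFunc ℚ) : ℚ⸨X⸩) = ((PowerSeries.X : ℚ⟦X⟧) : ℚ⸨X⸩) := by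
  rw [RatFunc.coe_X, PowerSeries.coe_X]

theorem coe_ratFunc_X_mul {f : RatFunc ℚ} {F : ℚ⟦X⟧} (hf : (f : ℚ⸨X⸩) = F) :
    ((RatFunc.X * f : RatFunc ℚ) : ℚ⸨X⸩) = ((PowerSeries.X * F : ℚ⟦X⟧) : ℚ⸨X⸩) := by
  rw [map_mul, coe_ratFunc_X, hf, PowerSeries.coe_mul]

theorem coe_ratDeriv {f : RatFunc ℚ} {F : ℚ⟦X⟧} (hf : (f : ℚ⸨X⸩) = F) :
    (ratDeriv f : ℚ⸨X⸩) = (d⁄dX ℚ F : ℚ⸨X⸩) := by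
  have hden : ((f.denom : ℚ⟦X⟧) : ℚ⸨X⸩) ≠ 0 :=
    (map_ne_zero_iff _ HahnSeries.ofPowerSeries_injective).2
      (Polynomial.coe_eq_zero_iff.not.2 f.denom_ne_zero)
  have hnum : (f.num : ℚ⟦X⟧) = F * f.denom := by
    apply HahnSeries.ofPowerSeries_injective (Γ := ℤ)
    rw [PowerSeries.coe_mul, ← hf, ← coe_algebraMap_polynomial, ← coe_algebraMap_polynomial,
      ← div_eq_iff (by rwa [coe_algebraMap_polynomial]), ← map_div₀, RatFunc.num_div_denom]
  have hquotient :
      ((derivative f.num * f.denom - f.num * derivative f.denom : ℚ[X]) : ℚ⟦X⟧) =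
        d⁄dX ℚ F * ((f.denom ^ 2 : ℚ[X]) : ℚ⟦X⟧) := by
    push_cast
    rw [← PowerSeries.derivative_coe, ← PowerSeries.derivative_coe, hnum, Derivation.leibniz,
      smul_eq_mul, smul_eq_mul]
    ring
  rw [ratDeriv, RatFunc.mk_eq_div, map_div₀, coe_algebraMap_polynomial,
    coe_algebraMap_polynomial, hquotient, PowerSeries.coe_mul, mul_div_assoc,
    div_self (by simpa using hden), mul_one]

theorem coe_ratFunc_X_mul_ratDeriv {f : RatFunc ℚ} {F : ℚ⟦X⟧} (hf : (f : ℚ⸨X⸩) = F) :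
    ((RatFunc.X * ratDeriv f : RatFunc ℚ) : ℚ⸨X⸩)
      = ((PowerSeries.X * d⁄dX ℚ F : ℚ⟦X⟧) : ℚ⸨X⸩) :=
  coe_ratFunc_X_mul (coe_ratDeriv hf)

-- The terms of the recursion for `e m` that act on `e (m - 1)`; `recOp` is its power-series twin.
def ratRecOp (β γ : ℚ) (f : RatFunc ℚ) : RatFunc ℚ :=
  β • f - RatFunc.X * ratDeriv f + γ • (RatFunc.X * ratDeriv (RatFunc.X * f))
    + (1 / 4 : ℚ) • (RatFunc.X * ratDeriv (RatFunc.X * ratDeriv (RatFunc.X * f)))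

def recOp (β γ : ℚ) (F : ℚ⟦X⟧) : ℚ⟦X⟧ :=
  β • F - PowerSeries.X * d⁄dX ℚ F + γ • (PowerSeries.X * d⁄dX ℚ (PowerSeries.X * F))
    + (1 / 4 : ℚ) • (PowerSeries.X * d⁄dX ℚ (PowerSeries.X * d⁄dX ℚ (PowerSeries.X * F)))

theorem coe_ratRecOp (β γ : ℚ) {f : RatFunc ℚ} {F : ℚ⟦X⟧} (hf : (f : ℚ⸨X⸩) = F) :
    (ratRecOp β γ f : ℚ⸨X⸩) = recOp β γ F := by
  rw [ratRecOp, map_add, map_add, map_sub, coe_rat_smul, coe_rat_smul, coe_rat_smul, hf,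
    coe_ratFunc_X_mul_ratDeriv hf, coe_ratFunc_X_mul_ratDeriv (coe_ratFunc_X_mul hf),
    coe_ratFunc_X_mul_ratDeriv (coe_ratFunc_X_mul_ratDeriv (coe_ratFunc_X_mul hf)), recOp]
  simp only [PowerSeries.coe_add, PowerSeries.coe_sub, PowerSeries.coe_smul]

theorem coeff_recOp (β γ : ℚ) (F : ℚ⟦X⟧) (n : ℕ) :
    PowerSeries.coeff n (recOp β γ F) = (β - n) * PowerSeries.coeff n F
      + n * (γ + n / 4) * PowerSeries.coeff n (PowerSeries.X * F) := by
  simp only [recOp, map_add, map_sub, PowerSeries.coeff_smul, PowerSeries.coeff_X_mul_derivative,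
    smul_eq_mul]
  ring

theorem coe_eq_of_ratRecOp {q β γ : ℚ} {f g c : RatFunc ℚ} {F G C : ℚ⟦X⟧}
    (hf : (f : ℚ⸨X⸩) = F) (hc : (c : ℚ⸨X⸩) = C)
    (hg : g / RatFunc.X - q • g + ratRecOp β γ f = c / RatFunc.X)
    (hG : G - q • (PowerSeries.X * G) + PowerSeries.X * recOp β γ F = C) :
    (g : ℚ⸨X⸩) = G := by
  set x : ℚ⸨X⸩ := HahnSeries.ofPowerSeries ℤ ℚ PowerSeries.X
  have hx : x ≠ 0 := by simp [x]
  have hgL : (g : ℚ⸨X⸩) / x - q • (g : ℚ⸨X⸩) + recOp β γ F = C / x := by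
    simpa only [map_add, map_sub, map_div₀, coe_rat_smul, coe_ratFunc_X, coe_ratRecOp β γ hf, hc]
      using congrArg (fun h : RatFunc ℚ => (h : ℚ⸨X⸩)) hg
  have hGL : (G : ℚ⸨X⸩) - q • (x * G) + x * recOp β γ F = C := by
    simpa only [PowerSeries.coe_add, PowerSeries.coe_sub, PowerSeries.coe_mul,
      PowerSeries.coe_smul] using congrArg (HahnSeries.ofPowerSeries ℤ ℚ) hG
  have hunit : 1 - q • x ≠ 0 := fun h => by
    simpa [x] using congrArg (HahnSeries.coeff · 0) h
  -- multiplied by `x`, both `g` and `G` solve `y * (1 - q • x) = C - x * recOp β γ F`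
  apply mul_right_cancel₀ hunit
  simp only [← HahnSeries.C_mul_eq_smul] at hgL hGL ⊢
  field_simp at hgL
  linear_combination hgL - hGL

def PhiRecurrence (a b w : ℚ) (φ : ℕ → ℚ[X]) : Prop :=
  ∀ n : ℕ, (((n : ℚ) + 1) * ((n : ℚ) + w)) • φ (n + 1) + (X ^ 2 - X) * derivative (φ n)
    - (C a + ((n : ℚ) + b) • X) * φ n + (1 / 4 : ℚ) • (X * (if n = 0 then 0 else φ (n - 1))) = 0

theorem PhiRecurrence.coeff_succ {a b w : ℚ} {φ : ℕ → ℚ[X]} (hφ : PhiRecurrence a b w φ)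
    (n m : ℕ) :
    ((n + 1) * (n + w)) * (φ (n + 1)).coeff m
      = (m + a) * (φ n).coeff m + (n + b + 1 - m) * (X * φ n).coeff m
        - 1 / 4 * (X * (if n = 0 then 0 else φ (n - 1))).coeff m := by
  -- `(X² - X) φ' = X (X φ)' - X φ - X φ'` makes every coefficient uniform in `m`
  have hsplit : (X ^ 2 - X : ℚ[X]) * derivative (φ n)
      = X * derivative (X * φ n) - X * φ n - X * derivative (φ n) := by
    rw [derivative_mul, derivative_X]; ring
  have h := congrArg (coeff · m) (hφ n)
  simp only [hsplit, coeff_add, coeff_sub, coeff_smul, coeff_X_mul_derivative, add_mul,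
    coeff_C_mul, smul_mul_assoc, smul_eq_mul, coeff_zero] at h
  linear_combination h

def weightedCoeffSeries (w : ℚ) (φ : ℕ → ℚ[X]) (m : ℕ) : ℚ⟦X⟧ :=
  PowerSeries.mk fun n => n.factorial * (ascPochhammer ℚ n).eval w * (φ n).coeff m

theorem weightedCoeffSeries_X_mul_zero (w : ℚ) (φ : ℕ → ℚ[X]) :
    weightedCoeffSeries w (fun n => X * φ n) 0 = 0 := by
  ext n; simp [weightedCoeffSeries]

theorem weightedCoeffSeries_X_mul_succ (w : ℚ) (φ : ℕ → ℚ[X]) (m : ℕ) :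
    weightedCoeffSeries w (fun n => X * φ n) (m + 1) = weightedCoeffSeries w φ m := by
  ext n; simp [weightedCoeffSeries, coeff_X_mul]

theorem PhiRecurrence.weightedCoeffSeries_rec {a b w : ℚ} {φ : ℕ → ℚ[X]}
    (hφ : PhiRecurrence a b w φ) (m : ℕ) :
    weightedCoeffSeries w φ m - ((m : ℚ) + a) • (PowerSeries.X * weightedCoeffSeries w φ m)
      + PowerSeries.X * recOp ((m : ℚ) - 1 - b) ((w - 1) / 4)
          (weightedCoeffSeries w (fun n => X * φ n) m)
      = PowerSeries.C ((φ 0).coeff m) := by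
  ext k
  rcases k with _ | n
  · simp [weightedCoeffSeries]
  simp only [map_add, map_sub, PowerSeries.coeff_smul, PowerSeries.coeff_succ_X_mul, coeff_recOp,
    PowerSeries.coeff_C, weightedCoeffSeries, PowerSeries.coeff_mk, smul_eq_mul,
    factorial_mul_ascPochhammer_eval_succ, Nat.succ_ne_zero, if_false]
  have hrec := hφ.coeff_succ n m
  rcases n with _ | j
  · simp only [Nat.factorial_zero, ascPochhammer_zero, eval_one, PowerSeries.coeff_zero_X_mul,
      Nat.cast_zero, ↓reduceIte, mul_zero, coeff_zero] at hrec ⊢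
    linear_combination hrec
  · simp only [PowerSeries.coeff_succ_X_mul, PowerSeries.coeff_mk,
      factorial_mul_ascPochhammer_eval_succ, Nat.succ_ne_zero, if_false,
      Nat.add_sub_cancel] at hrec ⊢
    push_cast at hrec ⊢
    linear_combination (j.factorial * (ascPochhammer ℚ j).eval w * ((j + 1) * (j + w))) * hrec

theorem coe_eq_weightedCoeffSeries {a b w : ℚ} {φ : ℕ → ℚ[X]} (hφ0 : φ 0 = 1)
    (hφ : PhiRecurrence a b w φ) {e : ℕ → RatFunc ℚ}
    (he : ∀ m : ℕ,
      e m / RatFunc.X - ((m : ℚ) + a) • e m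
        + ((m : ℚ) - 1 - b) • (if m = 0 then 0 else e (m - 1))
        - RatFunc.X * ratDeriv (if m = 0 then 0 else e (m - 1))
        + ((w - 1) / 4) • (RatFunc.X * ratDeriv (RatFunc.X * (if m = 0 then 0 else e (m - 1))))
        + (1 / 4 : ℚ) • (RatFunc.X * ratDeriv (RatFunc.X *
            ratDeriv (RatFunc.X * (if m = 0 then 0 else e (m - 1)))))
      = (if m = 0 then 1 else 0) / RatFunc.X)
    (m : ℕ) :
    (e m : ℚ⸨X⸩) = weightedCoeffSeries w φ m := by
  have step (m : ℕ) (hprev : ((if m = 0 then 0 else e (m - 1) : RatFunc ℚ) : ℚ⸨X⸩)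
      = weightedCoeffSeries w (fun n => X * φ n) m) :
      (e m : ℚ⸨X⸩) = weightedCoeffSeries w φ m := by
    refine coe_eq_of_ratRecOp (c := if m = 0 then 1 else 0) hprev ?_ ?_
      (hφ.weightedCoeffSeries_rec m)
    · rw [hφ0, coeff_one]
      split_ifs <;> simp
    · rw [← he m, ratRecOp]
      abel
  induction m with
  | zero => exact step 0 (by simp [weightedCoeffSeries_X_mul_zero])
  | succ m ih => exact step (m + 1) (by simpa [weightedCoeffSeries_X_mul_succ] using ih)

/-- For all `m, n ≥ 0`: the rational function `e m` is regular at `v = 0` (its Laurent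
expansion at `0` has no negative-index coefficients) and its `n`-th Taylor coefficient at
`v = 0` equals `n! Γ(n+w)/Γ(w)` times the coefficient of `u^m` in `φₙ(u)`; i.e. the identity
`∑_{n≥0} (n! Γ(n+w)/Γ(w)) φₙ(u) vⁿ = ∑_{m≥0} e_m(v) u^m` holds coefficientwise. -/
theorem e_taylor_coeff
    (a b4 c4 : ℕ) (hw : 0 < 4 * a + b4 + c4)
    (φ : ℕ → Polynomial ℚ)
    (hφ0 : φ 0 = 1)
    (hφrec : ∀ n : ℕ,
      (((n : ℚ) + 1) * ((n : ℚ) + (2 * a + b4 / 2 + c4 / 2))) • φ (n + 1)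
        + (X ^ 2 - X) * Polynomial.derivative (φ n)
        - (Polynomial.C (a : ℚ) + ((n : ℚ) + b4 / 4) • X) * φ n
        + (1/4 : ℚ) • (X * (if n = 0 then 0 else φ (n - 1))) = 0)
    (e : ℕ → RatFunc ℚ)
    (herec : ∀ m : ℕ,
      e m / RatFunc.X - ((m : ℚ) + a) • e m
        + ((m : ℚ) - 1 - b4 / 4) • (if m = 0 then 0 else e (m - 1))
        - RatFunc.X * ratDeriv (if m = 0 then 0 else e (m - 1))
        + (((2 * (a : ℚ) + b4 / 2 + c4 / 2) - 1) / 4) •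
            (RatFunc.X * ratDeriv (RatFunc.X * (if m = 0 then 0 else e (m - 1))))
        + (1/4 : ℚ) • (RatFunc.X * ratDeriv (RatFunc.X *
            ratDeriv (RatFunc.X * (if m = 0 then 0 else e (m - 1)))))
      = (if m = 0 then 1 else 0) / RatFunc.X)
    (m : ℕ) :
    (∀ i : ℤ, i < 0 → ((e m : LaurentSeries ℚ)).coeff i = 0) ∧
    (∀ n : ℕ, (((e m : LaurentSeries ℚ)).coeff (n : ℤ) : ℝ)
        = (Nat.factorial n : ℝ) *
            Real.Gamma (n + (2 * a + b4 / 2 + c4 / 2 : ℝ)) /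
            Real.Gamma (2 * a + b4 / 2 + c4 / 2 : ℝ) *
          ((φ n).coeff m : ℝ)) := by
  have hE := coe_eq_weightedCoeffSeries hφ0 hφrec herec m
  have hwpos : (0 : ℝ) < 2 * a + b4 / 2 + c4 / 2 := by
    have : (0 : ℝ) < 4 * a + b4 + c4 := by exact_mod_cast hw
    linarith
  refine ⟨fun i hi => by simp [hE, PowerSeries.coeff_coe, hi], fun n => ?_⟩
  rw [hE, LaurentSeries.coeff_coe_powerSeries, weightedCoeffSeries, PowerSeries.coeff_mk,
    mul_div_assoc, add_comm (n : ℝ), Real.Gamma_add_nat_div_Gamma_eq hwpos]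
  simp [ascPochhammer_eval_ratCast]
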